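/- arXiv:1504.04509 — 3 statements merged into one kernel-verified Lean document; each statement's English description precedes it below -/
import Mathlib

section
/- Let 1 < p < ∞ and 0 ≤ λ ≤ n, and let b be a locally integrable function on ℝⁿ. If there exists c > 0 such that ‖C_b(f)‖_{M_{p,λ}} ≤ c ‖f‖_{M_{p,λ}} for all f ∈ M_{p,λ}(ℝⁿ), then b ∈ BMO(ℝⁿ); more precisely, (1/|Q|) ∫_Q |b(y) − b_Q| dy ≲ c uniformly over all cubes Q. -/
open MeasureTheory ENNReal Set

noncomputable section

/-- `ℝⁿ` with the Euclidean metric. -/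
abbrev Rn (n : ℕ) : Type := EuclideanSpace ℝ (Fin n)

/-- The axis-parallel cube with center `c` and side length `h`. -/
def zCube {n : ℕ} (c : Rn n) (h : ℝ) : Set (Rn n) := {x | ∀ i, |x i - c i| ≤ h / 2}

/-- `log⁺ t = max (log t) 0`. -/
def logPlus (t : ℝ) : ℝ := max (Real.log t) 0

/-- The Hardy–Littlewood maximal operator of an `ℝ≥0∞`-valued function:
`sup_{Q ∋ x} |Q|⁻¹ ∫_Q g`, the supremum over all axis-parallel cubes containing `x`. -/
def maxE {n : ℕ} (g : Rn n → ℝ≥0∞) (x : Rn n) : ℝ≥0∞ :=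
  ⨆ (c : Rn n) (h : ℝ) (_ : 0 < h) (_ : x ∈ zCube c h),
    (ENNReal.ofReal (h ^ n))⁻¹ * ∫⁻ y in zCube c h, g y

/-- The Hardy–Littlewood maximal operator of a real function. -/
def HLM {n : ℕ} (f : Rn n → ℝ) (x : Rn n) : ℝ≥0∞ :=
  maxE (fun y => ENNReal.ofReal |f y|) x

/-- The fractional maximal operator `M_α` applied to an `ℝ≥0∞`-valued function:
`sup_{Q ∋ x} |Q|^{(α-n)/n} ∫_Q g`. -/
def fracMaxE {n : ℕ} (α : ℝ) (g : Rn n → ℝ≥0∞) (x : Rn n) : ℝ≥0∞ :=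
  ⨆ (c : Rn n) (h : ℝ) (_ : 0 < h) (_ : x ∈ zCube c h),
    ENNReal.ofReal (h ^ (α - (n : ℝ))) * ∫⁻ y in zCube c h, g y

/-- The maximal commutator `C_b(f)(x) = sup_{Q ∋ x} |Q|⁻¹ ∫_Q |b x - b y| |f y| dy`. -/
def maxComm {n : ℕ} (b f : Rn n → ℝ) (x : Rn n) : ℝ≥0∞ :=
  ⨆ (c : Rn n) (h : ℝ) (_ : 0 < h) (_ : x ∈ zCube c h),
    (ENNReal.ofReal (h ^ n))⁻¹ * ∫⁻ y in zCube c h, ENNReal.ofReal (|b x - b y| * |f y|)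

/-- The mean value `f_Q = |Q|⁻¹ ∫_Q f` of `f` over the cube with center `c`, side `h`. -/
def cubeMean {n : ℕ} (f : Rn n → ℝ) (c : Rn n) (h : ℝ) : ℝ :=
  (h ^ n)⁻¹ * ∫ y in zCube c h, f y

/-- The mean oscillation `|Q|⁻¹ ∫_Q |b - b_Q|` of `b` over a cube. -/
def oscAvg {n : ℕ} (b : Rn n → ℝ) (c : Rn n) (h : ℝ) : ℝ≥0∞ :=
  (ENNReal.ofReal (h ^ n))⁻¹ * ∫⁻ y in zCube c h, ENNReal.ofReal |b y - cubeMean b c h|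

/-- The BMO seminorm `‖b‖_* = sup_Q |Q|⁻¹ ∫_Q |b - b_Q|`. -/
def bmoNorm {n : ℕ} (b : Rn n → ℝ) : ℝ≥0∞ :=
  ⨆ (c : Rn n) (h : ℝ) (_ : 0 < h), oscAvg b c h

/-- Morrey norm `‖g‖_{M_{p,λ}} = sup_{x, r>0} r^{(λ-n)/p} (∫_{B(x,r)} g^p)^{1/p}`
for an `ℝ≥0∞`-valued function. -/
def morreyE {n : ℕ} (p lam : ℝ) (g : Rn n → ℝ≥0∞) : ℝ≥0∞ :=
  ⨆ (x : Rn n) (r : ℝ) (_ : 0 < r),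
    ENNReal.ofReal (r ^ ((lam - n) / p)) * (∫⁻ y in Metric.ball x r, g y ^ p) ^ (1 / p)

/-- Morrey norm of a real function. -/
def morrey {n : ℕ} (p lam : ℝ) (f : Rn n → ℝ) : ℝ≥0∞ :=
  morreyE p lam (fun y => ENNReal.ofReal |f y|)

/-- The Zygmund function `Φ(t) = t (1 + log⁺ t)`, extended to `ℝ≥0∞`. -/
def zygFnE (t : ℝ≥0∞) : ℝ≥0∞ := t * (1 + ENNReal.ofReal (logPlus t.toReal))

/-- The Luxemburg-type `L(1+log⁺L)`-average of `g` over a cube: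
`inf {α > 0 : |Q|⁻¹ ∫_Q Φ(g/α) ≤ 1}` (as an element of `ℝ≥0∞`, `= ∞` if no such `α`). -/
def zygAvgE {n : ℕ} (g : Rn n → ℝ≥0∞) (c : Rn n) (h : ℝ) : ℝ≥0∞ :=
  sInf {a : ℝ≥0∞ | ∃ α : ℝ, 0 < α ∧ a = ENNReal.ofReal α ∧
    (ENNReal.ofReal (h ^ n))⁻¹ * ∫⁻ y in zCube c h, zygFnE (g y / ENNReal.ofReal α) ≤ 1}

/-- The `L(1+log⁺L)`-average of a real function over a cube. -/
def zygAvg {n : ℕ} (f : Rn n → ℝ) (c : Rn n) (h : ℝ) : ℝ≥0∞ :=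
  zygAvgE (fun y => ENNReal.ofReal |f y|) c h

/-- The weak `L(1+log⁺L)`-average of `g` over a cube:
`inf {α > 0 : ∀ t > 0, |Q|⁻¹ |{x ∈ Q : g x > α t}| ≤ (1/t)(1 + log⁺(1/t))}`. -/
def weakZygAvgE {n : ℕ} (g : Rn n → ℝ≥0∞) (c : Rn n) (h : ℝ) : ℝ≥0∞ :=
  sInf {a : ℝ≥0∞ | ∃ α : ℝ, 0 < α ∧ a = ENNReal.ofReal α ∧ ∀ t : ℝ, 0 < t →
    (ENNReal.ofReal (h ^ n))⁻¹ * volume {x ∈ zCube c h | ENNReal.ofReal (α * t) < g x}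
      ≤ ENNReal.ofReal ((1 / t) * (1 + logPlus (1 / t)))}

/-- The Zygmund–Morrey norm `sup_Q |Q|^{λ/n} ‖g‖_{L(1+log⁺L),Q}` of an `ℝ≥0∞`-valued function. -/
def zygMorreyE {n : ℕ} (lam : ℝ) (g : Rn n → ℝ≥0∞) : ℝ≥0∞ :=
  ⨆ (c : Rn n) (h : ℝ) (_ : 0 < h), ENNReal.ofReal (h ^ lam) * zygAvgE g c h

/-- The Zygmund–Morrey norm of a real function. -/
def zygMorrey {n : ℕ} (lam : ℝ) (f : Rn n → ℝ) : ℝ≥0∞ :=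
  zygMorreyE lam (fun y => ENNReal.ofReal |f y|)

/-- The weak Zygmund–Morrey norm `sup_Q |Q|^{λ/n} ‖g‖_{WL(1+log⁺L),Q}`. -/
def weakZygMorreyE {n : ℕ} (lam : ℝ) (g : Rn n → ℝ≥0∞) : ℝ≥0∞ :=
  ⨆ (c : Rn n) (h : ℝ) (_ : 0 < h), ENNReal.ofReal (h ^ lam) * weakZygAvgE g c h

/-- The commutator `[M,b]f(x) = M(bf)(x) - b(x) Mf(x)`. -/
def commMb {n : ℕ} (b f : Rn n → ℝ) (x : Rn n) : ℝ :=
  (HLM (fun y => b y * f y) x).toReal - b x * (HLM f x).toReal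

/-- `f` is radially decreasing: `f x = φ ‖x‖` with `φ` nonnegative and
nonincreasing on `(0,∞)`, measurable. -/
def RadDec {n : ℕ} (f : Rn n → ℝ) : Prop :=
  ∃ φ : ℝ → ℝ, Measurable φ ∧ (∀ r : ℝ, 0 < r → 0 ≤ φ r) ∧
    AntitoneOn φ (Set.Ioi 0) ∧ ∀ x, f x = φ ‖x‖

/-- `∫_Q |f| (1 + log⁺(|f| / |f|_Q))`. -/
def zygInt {n : ℕ} (f : Rn n → ℝ) (c : Rn n) (h : ℝ) : ℝ≥0∞ :=
  ∫⁻ y in zCube c h,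
    ENNReal.ofReal (|f y| * (1 + logPlus (|f y| / cubeMean (fun z => |f z|) c h)))

/-- `∫_0^t φ(ρ) ρ^{n-1} dρ`. -/
def radInt1 (n : ℕ) (φ : ℝ → ℝ) (t : ℝ) : ℝ≥0∞ :=
  ∫⁻ ρ in Set.Ioc (0 : ℝ) t, ENNReal.ofReal (φ ρ * ρ ^ (n - 1))

/-- `∫_0^x (1/t) ∫_0^t φ(ρ) ρ^{n-1} dρ dt`. -/
def radInt2 (n : ℕ) (φ : ℝ → ℝ) (x : ℝ) : ℝ≥0∞ :=
  ∫⁻ t in Set.Ioc (0 : ℝ) x, (ENNReal.ofReal t)⁻¹ * radInt1 n φ t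

/-- `∫_0^x (1/y) ∫_0^y (1/t) ∫_0^t φ(ρ) ρ^{n-1} dρ dt dy`. -/
def radInt3 (n : ℕ) (φ : ℝ → ℝ) (x : ℝ) : ℝ≥0∞ :=
  ∫⁻ y in Set.Ioc (0 : ℝ) x, (ENNReal.ofReal y)⁻¹ * radInt2 n φ y

/-- `sup_{x>0} x^{λ-n} ∫_0^x (1/t) ∫_0^t φ(ρ) ρ^{n-1} dρ dt`. -/
def radSup2 (n : ℕ) (lam : ℝ) (φ : ℝ → ℝ) : ℝ≥0∞ :=
  ⨆ (x : ℝ) (_ : 0 < x), ENNReal.ofReal (x ^ (lam - (n : ℝ))) * radInt2 n φ x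

/-- `sup_{x>0} x^{λ-n} ∫_0^x (1/y) ∫_0^y (1/t) ∫_0^t φ(ρ) ρ^{n-1} dρ dt dy`. -/
def radSup3 (n : ℕ) (lam : ℝ) (φ : ℝ → ℝ) : ℝ≥0∞ :=
  ⨆ (x : ℝ) (_ : 0 < x), ENNReal.ofReal (x ^ (lam - (n : ℝ))) * radInt3 n φ x

/-!
Test the hypothesis on `f = 1_Q`. For `x ∈ Q` the cube `Q` itself competes in the supremum
defining `C_b(1_Q)(x)`, so `|b(x) - b_Q| ≤ |Q|⁻¹ ∫_Q |b(x) - b(y)| dy ≤ C_b(1_Q)(x)`. By Hölder,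
the mean oscillation of `b` on `Q` is at most the `L^p`-average of `C_b(1_Q)` over `Q`, hence over
a ball of radius `R ≈ √n h` containing `Q`, and the Morrey norm bounds that by
`|Q|^{-1/p} R^{(n-λ)/p} c ‖1_Q‖_{M_{p,λ}}`. Finally `‖1_Q‖_{M_{p,λ}} ≲ h^{λ/p}`, so all powers of
the side length `h` cancel.
-/

lemma isClosed_zCube {n : ℕ} (c : Rn n) (h : ℝ) : IsClosed (zCube c h) := by
  simp only [zCube, Set.ofPred_forall]
  exact isClosed_iInter fun i => isClosed_le (by fun_prop) continuous_const

lemma measurableSet_zCube {n : ℕ} (c : Rn n) (h : ℝ) : MeasurableSet (zCube c h) :=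
  (isClosed_zCube c h).measurableSet

lemma zCube_eq_preimage_pi_Icc {n : ℕ} (c : Rn n) (h : ℝ) :
    zCube c h = (MeasurableEquiv.toLp 2 (Fin n → ℝ)).symm ⁻¹'
      Set.univ.pi fun i => Set.Icc (c i - h / 2) (c i + h / 2) := by
  ext x
  simp [zCube, abs_le, Pi.le_def, forall_and, add_comm]

lemma volume_zCube {n : ℕ} (c : Rn n) {h : ℝ} (hh : 0 ≤ h) :
    volume (zCube c h) = ENNReal.ofReal (h ^ n) := by
  rw [zCube_eq_preimage_pi_Icc,
    (EuclideanSpace.volume_preserving_symm_measurableEquiv_toLp (Fin n)).measure_preimage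
      (MeasurableSet.univ_pi fun _ => measurableSet_Icc).nullMeasurableSet,
    volume_pi_pi]
  simp [Real.volume_Icc, ENNReal.ofReal_pow hh]

lemma zCube_subset_closedBall {n : ℕ} (c : Rn n) {h : ℝ} (hh : 0 ≤ h) :
    zCube c h ⊆ Metric.closedBall c (√n * (h / 2)) := by
  intro x hx
  rw [Metric.mem_closedBall, EuclideanSpace.dist_eq, ← Real.sqrt_sq (by positivity : 0 ≤ h / 2),
    ← Real.sqrt_mul (Nat.cast_nonneg n)]
  refine Real.sqrt_le_sqrt ?_
  calc ∑ i, dist (x i) (c i) ^ 2 ≤ ∑ _i : Fin n, (h / 2) ^ 2 := by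
        gcongr with i
        exact (Real.dist_eq _ _).trans_le (hx i)
    _ = n * (h / 2) ^ 2 := by simp

lemma zCube_subset_ball {n : ℕ} (c : Rn n) {h : ℝ} (hh : 0 < h) :
    zCube c h ⊆ Metric.ball c ((√n + 1) * h) :=
  (zCube_subset_closedBall c hh.le).trans
    (Metric.closedBall_subset_ball (by nlinarith [Real.sqrt_nonneg n]))

lemma ball_subset_zCube {n : ℕ} (x : Rn n) (r : ℝ) : Metric.ball x r ⊆ zCube x (2 * r) := by
  intro y hy i
  have := (PiLp.dist_apply_le y x i).trans_lt hy
  rw [Real.dist_eq] at this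
  linarith

lemma laverage_le_rpow_laverage_rpow {α : Type*} [MeasurableSpace α] {μ : Measure α}
    {f : α → ℝ≥0∞} (hf : AEMeasurable f μ) {p : ℝ} (hp : 1 < p) :
    ⨍⁻ x, f x ∂μ ≤ (⨍⁻ x, f x ^ p ∂μ) ^ (1 / p) := by
  set ν := (μ univ)⁻¹ • μ
  set q := Real.conjExponent p
  have hpq : p.HolderConjugate q := .conjExponent hp
  have hν : ν univ ≤ 1 := by simp [ν, ENNReal.inv_mul_le_one]
  calc ⨍⁻ x, f x ∂μ = ∫⁻ x, (f * 1) x ∂ν := by simp [laverage_eq', ν]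
    _ ≤ (∫⁻ x, f x ^ p ∂ν) ^ (1 / p) * (∫⁻ _, 1 ^ q ∂ν) ^ (1 / q) :=
        ENNReal.lintegral_mul_le_Lp_mul_Lq ν hpq (hf.smul_measure _) aemeasurable_const
    _ ≤ (⨍⁻ x, f x ^ p ∂μ) ^ (1 / p) := by
        simp only [ENNReal.one_rpow, lintegral_const, one_mul]
        exact mul_le_of_le_one_right' (ENNReal.rpow_le_one hν (by simp [hpq.symm.pos.le]))

lemma rpow_setLIntegral_ball_le_morreyE {n : ℕ} {p : ℝ} (hp : 0 ≤ p) (lam : ℝ)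
    (g : Rn n → ℝ≥0∞) (x : Rn n) {r : ℝ} (hr : 0 < r) :
    (∫⁻ y in Metric.ball x r, g y ^ p) ^ (1 / p)
      ≤ ENNReal.ofReal (r ^ ((n : ℝ) - lam)) ^ (1 / p) * morreyE p lam g := by
  have hball : ENNReal.ofReal (r ^ ((lam - n) / p)) * (∫⁻ y in Metric.ball x r, g y ^ p) ^ (1 / p)
      ≤ morreyE p lam g :=
    le_iSup_of_le x <| le_iSup_of_le r <| le_iSup_of_le hr le_rfl
  have hcancel : ENNReal.ofReal (r ^ ((n : ℝ) - lam)) ^ (1 / p)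
      * ENNReal.ofReal (r ^ ((lam - n) / p)) = 1 := by
    rw [ENNReal.ofReal_rpow_of_nonneg (Real.rpow_nonneg hr.le _) (one_div_nonneg.2 hp),
      ← Real.rpow_mul hr.le, ← ENNReal.ofReal_mul (Real.rpow_nonneg hr.le _), ← Real.rpow_add hr,
      show (n - lam) * (1 / p) + (lam - n) / p = 0 by ring, Real.rpow_zero, ENNReal.ofReal_one]
  calc (∫⁻ y in Metric.ball x r, g y ^ p) ^ (1 / p)
      = ENNReal.ofReal (r ^ ((n : ℝ) - lam)) ^ (1 / p) * (ENNReal.ofReal (r ^ ((lam - n) / p))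
          * (∫⁻ y in Metric.ball x r, g y ^ p) ^ (1 / p)) := by rw [← mul_assoc, hcancel, one_mul]
    _ ≤ _ := by gcongr

lemma setLIntegral_ofReal_abs_indicator_one_rpow {α : Type*} [MeasurableSpace α]
    (μ : Measure α) {s : Set α} (hs : MeasurableSet s) (t : Set α) {p : ℝ} (hp : 0 < p) :
    ∫⁻ y in t, ENNReal.ofReal |s.indicator 1 y| ^ p ∂μ = μ (s ∩ t) := by
  have hpt : ∀ y, ENNReal.ofReal |s.indicator (1 : α → ℝ) y| ^ p = s.indicator 1 y := by
    intro y
    by_cases hy : y ∈ s <;> simp [hy, hp]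
  simp_rw [hpt]
  rw [lintegral_indicator_one hs, Measure.restrict_apply hs]

lemma rpow_sub_mul_min_pow_le {n : ℕ} {lam r h : ℝ} (hlam0 : 0 ≤ lam) (hlamn : lam ≤ n)
    (hr : 0 < r) (hh : 0 < h) :
    r ^ (lam - n) * min (h ^ n) ((2 * r) ^ n) ≤ 2 ^ n * h ^ lam := by
  have hpow : ∀ {t : ℝ}, 0 < t → t ^ (lam - n) * t ^ n = t ^ lam := fun ht => by
    rw [← Real.rpow_natCast, ← Real.rpow_add ht, sub_add_cancel]
  rcases le_total r h with hrh | hhr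
  · calc r ^ (lam - n) * min (h ^ n) ((2 * r) ^ n) ≤ r ^ (lam - n) * (2 * r) ^ n := by
          gcongr; exact min_le_right _ _
      _ = 2 ^ n * r ^ lam := by rw [mul_pow, ← hpow hr]; ring
      _ ≤ 2 ^ n * h ^ lam := by gcongr
  · calc r ^ (lam - n) * min (h ^ n) ((2 * r) ^ n) ≤ h ^ (lam - n) * h ^ n :=
          mul_le_mul (Real.rpow_le_rpow_of_nonpos hh hhr (by linarith)) (min_le_left _ _)
            (by positivity) (Real.rpow_nonneg hh.le _)
      _ = 1 * h ^ lam := by rw [hpow hh, one_mul]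
      _ ≤ 2 ^ n * h ^ lam := by gcongr; exact one_le_pow₀ one_le_two

lemma morrey_indicator_zCube_le {n : ℕ} {p lam : ℝ} (hp : 0 < p) (hlam0 : 0 ≤ lam)
    (hlamn : lam ≤ n) (c : Rn n) {h : ℝ} (hh : 0 < h) :
    morrey p lam ((zCube c h).indicator 1) ≤ ENNReal.ofReal (2 ^ n * h ^ lam) ^ (1 / p) := by
  refine iSup_le fun x => iSup_le fun r => iSup_le fun hr => ?_
  have hvol :
      volume (zCube c h ∩ Metric.ball x r) ≤ ENNReal.ofReal (min (h ^ n) ((2 * r) ^ n)) := by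
    rw [ENNReal.ofReal_min, ← volume_zCube c hh.le, ← volume_zCube x (by positivity)]
    exact le_min (measure_mono inter_subset_left)
      (measure_mono (inter_subset_right.trans (ball_subset_zCube x r)))
  rw [setLIntegral_ofReal_abs_indicator_one_rpow _ (measurableSet_zCube c h) _ hp,
    div_eq_mul_one_div, Real.rpow_mul hr.le, ← ENNReal.ofReal_rpow_of_nonneg (by positivity)
      (by positivity), ← ENNReal.mul_rpow_of_nonneg _ _ (by positivity)]
  gcongr
  calc ENNReal.ofReal (r ^ (lam - n)) * volume (zCube c h ∩ Metric.ball x r)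
      ≤ ENNReal.ofReal (r ^ (lam - n)) * ENNReal.ofReal (min (h ^ n) ((2 * r) ^ n)) := by gcongr
    _ ≤ ENNReal.ofReal (2 ^ n * h ^ lam) := by
      rw [← ENNReal.ofReal_mul (by positivity)]
      exact ENNReal.ofReal_le_ofReal (rpow_sub_mul_min_pow_le hlam0 hlamn hr hh)

lemma ofReal_abs_sub_cubeMean_le {n : ℕ} {b : Rn n → ℝ} {c : Rn n} {h : ℝ} (hh : 0 < h)
    (hb : IntegrableOn b (zCube c h)) (x : Rn n) :
    ENNReal.ofReal |b x - cubeMean b c h|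
      ≤ (ENNReal.ofReal (h ^ n))⁻¹ * ∫⁻ y in zCube c h, ENNReal.ofReal |b x - b y| := by
  have hV : 0 < h ^ n := pow_pos hh n
  have hconst : IntegrableOn (fun _ => b x) (zCube c h) := by
    simp [volume_zCube c hh.le]
  have hmean : b x - cubeMean b c h = (h ^ n)⁻¹ * ∫ y in zCube c h, (b x - b y) := by
    rw [integral_sub hconst hb, setIntegral_const, measureReal_def, volume_zCube c hh.le,
      ENNReal.toReal_ofReal hV.le, cubeMean, smul_eq_mul]
    field_simp
  have hdiff : Integrable (fun y => |b x - b y|) (volume.restrict (zCube c h)) :=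
    (hconst.sub hb).abs
  rw [← ENNReal.ofReal_inv_of_pos hV,
    ← ofReal_integral_eq_lintegral_ofReal hdiff (.of_forall fun _ => abs_nonneg _),
    ← ENNReal.ofReal_mul (by positivity), hmean, abs_mul, abs_of_pos (inv_pos.2 hV)]
  gcongr
  exact abs_integral_le_integral_abs

lemma ofReal_abs_sub_cubeMean_le_maxComm {n : ℕ} {b : Rn n → ℝ} {c : Rn n} {h : ℝ} (hh : 0 < h)
    (hb : IntegrableOn b (zCube c h)) {x : Rn n} (hx : x ∈ zCube c h) :
    ENNReal.ofReal |b x - cubeMean b c h| ≤ maxComm b ((zCube c h).indicator 1) x := by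
  refine (ofReal_abs_sub_cubeMean_le hh hb x).trans ?_
  refine le_iSup_of_le c <| le_iSup_of_le h <| le_iSup_of_le hh <| le_iSup_of_le hx ?_
  refine (congrArg _ (setLIntegral_congr_fun (measurableSet_zCube c h) fun y hy => ?_)).le
  simp [Set.indicator_of_mem hy]

lemma oscAvg_le_morreyE_maxComm_indicator {n : ℕ} {p : ℝ} (hp : 1 < p) (lam : ℝ)
    {b : Rn n → ℝ} {c : Rn n} {h : ℝ} (hh : 0 < h) (hb : IntegrableOn b (zCube c h)) :
    oscAvg b c h ≤ ENNReal.ofReal ((h ^ n)⁻¹ * ((√n + 1) * h) ^ ((n : ℝ) - lam)) ^ (1 / p)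
      * morreyE p lam (maxComm b ((zCube c h).indicator 1)) := by
  set Q := zCube c h
  set g := maxComm b (Q.indicator 1)
  set R := (√n + 1) * h
  have hQ : volume Q = ENNReal.ofReal (h ^ n) := volume_zCube c hh.le
  have hp0 : 0 ≤ 1 / p := by positivity
  calc oscAvg b c h = ⨍⁻ y in Q, ENNReal.ofReal |b y - cubeMean b c h| ∂volume := by
        rw [setLAverage_eq, hQ, ENNReal.div_eq_inv_mul]; rfl
    _ ≤ (⨍⁻ y in Q, ENNReal.ofReal |b y - cubeMean b c h| ^ p ∂volume) ^ (1 / p) :=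
        laverage_le_rpow_laverage_rpow (by have := hb.aemeasurable; fun_prop) hp
    _ ≤ ((ENNReal.ofReal (h ^ n))⁻¹ * ∫⁻ y in Metric.ball c R, g y ^ p) ^ (1 / p) := by
        rw [setLAverage_eq, hQ, ENNReal.div_eq_inv_mul]
        gcongr ((ENNReal.ofReal (h ^ n))⁻¹ * ?_) ^ _
        calc ∫⁻ y in Q, ENNReal.ofReal |b y - cubeMean b c h| ^ p
            ≤ ∫⁻ y in Q, g y ^ p :=
              setLIntegral_mono' (measurableSet_zCube c h) fun y hy => ENNReal.rpow_le_rpow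
                (ofReal_abs_sub_cubeMean_le_maxComm hh hb hy) (by linarith)
          _ ≤ _ := lintegral_mono_set (zCube_subset_ball c hh)
    _ = (ENNReal.ofReal (h ^ n))⁻¹ ^ (1 / p) * (∫⁻ y in Metric.ball c R, g y ^ p) ^ (1 / p) :=
        ENNReal.mul_rpow_of_nonneg _ _ hp0
    _ ≤ (ENNReal.ofReal (h ^ n))⁻¹ ^ (1 / p)
          * (ENNReal.ofReal (R ^ ((n : ℝ) - lam)) ^ (1 / p) * morreyE p lam g) := by
        gcongr
        exact rpow_setLIntegral_ball_le_morreyE (by linarith) lam g c (by positivity)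
    _ = _ := by
        rw [← mul_assoc, ← ENNReal.mul_rpow_of_nonneg _ _ hp0,
          ← ENNReal.ofReal_inv_of_pos (by positivity), ← ENNReal.ofReal_mul (by positivity)]

lemma inv_pow_mul_mul_rpow_mul_rpow {n : ℕ} {a h : ℝ} (ha : 0 ≤ a) (hh : 0 < h) (lam : ℝ) :
    (h ^ n)⁻¹ * (a * h) ^ ((n : ℝ) - lam) * h ^ lam = a ^ ((n : ℝ) - lam) := by
  rw [Real.mul_rpow ha hh.le, mul_assoc, mul_assoc, ← Real.rpow_add hh, sub_add_cancel,
    Real.rpow_natCast, mul_left_comm, inv_mul_cancel₀ (by positivity), mul_one]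

theorem stmt1_general (n : ℕ) (p lam : ℝ) (hp : 1 < p)
    (hlam0 : 0 ≤ lam) (hlamn : lam ≤ (n : ℝ))
    (b : Rn n → ℝ) (hb : MeasureTheory.LocallyIntegrable b volume)
    (c : ℝ)
    (H : ∀ f : Rn n → ℝ, MeasureTheory.LocallyIntegrable f volume →
      morrey p lam f ≠ ⊤ →
      morreyE p lam (maxComm b f) ≤ ENNReal.ofReal c * morrey p lam f) :
    ∃ C : ℝ, 0 < C ∧ ∀ (ctr : Rn n) (h : ℝ), 0 < h →
      oscAvg b ctr h ≤ ENNReal.ofReal (C * c) := by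
  have hp0 : 0 ≤ 1 / p := by positivity
  refine ⟨((√n + 1) ^ ((n : ℝ) - lam) * 2 ^ n) ^ (1 / p), by positivity, fun ctr h hh => ?_⟩
  have hbQ : IntegrableOn b (zCube ctr h) :=
    (hb.integrableOn_isCompact (isCompact_closedBall ctr _)).mono_set
      (zCube_subset_closedBall ctr hh.le)
  have hf : LocallyIntegrable ((zCube ctr h).indicator 1) :=
    ((integrableOn_const (C := (1 : ℝ)) (by simp [volume_zCube ctr hh.le])).integrable_indicator
      (measurableSet_zCube ctr h)).locallyIntegrable
  have hfM := morrey_indicator_zCube_le (p := p) (by linarith) hlam0 hlamn ctr hh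
  have hfM_ne_top : morrey p lam ((zCube ctr h).indicator 1) ≠ ⊤ :=
    ne_top_of_le_ne_top (ENNReal.rpow_ne_top_of_nonneg hp0 ENNReal.ofReal_ne_top) hfM
  have hscale : (h ^ n)⁻¹ * ((√n + 1) * h) ^ ((n : ℝ) - lam) * (2 ^ n * h ^ lam)
      = (√n + 1) ^ ((n : ℝ) - lam) * 2 ^ n := by
    have := inv_pow_mul_mul_rpow_mul_rpow (n := n) (a := √n + 1) (by positivity) hh lam
    linear_combination 2 ^ n * this
  calc oscAvg b ctr h
      ≤ ENNReal.ofReal ((h ^ n)⁻¹ * ((√n + 1) * h) ^ ((n : ℝ) - lam)) ^ (1 / p)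
          * morreyE p lam (maxComm b ((zCube ctr h).indicator 1)) :=
        oscAvg_le_morreyE_maxComm_indicator hp lam hh hbQ
    _ ≤ ENNReal.ofReal ((h ^ n)⁻¹ * ((√n + 1) * h) ^ ((n : ℝ) - lam)) ^ (1 / p)
          * (ENNReal.ofReal c * ENNReal.ofReal (2 ^ n * h ^ lam) ^ (1 / p)) := by
        gcongr
        exact (H _ hf hfM_ne_top).trans (by gcongr)
    _ = ENNReal.ofReal (((√n + 1) ^ ((n : ℝ) - lam) * 2 ^ n) ^ (1 / p) * c) := by
        rw [mul_left_comm, ← ENNReal.mul_rpow_of_nonneg _ _ hp0,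
          ← ENNReal.ofReal_mul (by positivity), hscale,
          ENNReal.ofReal_rpow_of_nonneg (by positivity) hp0, mul_comm,
          ENNReal.ofReal_mul (by positivity)]

/-- If `1 < p < ∞`, `0 ≤ λ ≤ n`, `b` is locally integrable and
`‖C_b f‖_{M_{p,λ}} ≤ c ‖f‖_{M_{p,λ}}` for all `f ∈ M_{p,λ}`, then `b ∈ BMO(ℝⁿ)`;
more precisely `|Q|⁻¹ ∫_Q |b - b_Q| ≲ c` uniformly over all cubes `Q`. -/
theorem stmt1 (n : ℕ) (hn : 0 < n) (p lam : ℝ) (hp : 1 < p)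
    (hlam0 : 0 ≤ lam) (hlamn : lam ≤ (n : ℝ))
    (b : Rn n → ℝ) (hb : MeasureTheory.LocallyIntegrable b volume)
    (c : ℝ) (hc : 0 < c)
    (H : ∀ f : Rn n → ℝ, MeasureTheory.LocallyIntegrable f volume →
      morrey p lam f ≠ ⊤ →
      morreyE p lam (maxComm b f) ≤ ENNReal.ofReal c * morrey p lam f) :
    ∃ C : ℝ, 0 < C ∧ ∀ (ctr : Rn n) (h : ℝ), 0 < h →
      oscAvg b ctr h ≤ ENNReal.ofReal (C * c) :=
  stmt1_general n p lam hp hlam0 hlamn b hb c H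

end
end

section
/- Let 0 < λ < n. There is a constant c > 0 such that for every nonnegative nonincreasing measurable function φ on (0,∞), sup_{x>0} x^{λ−n} ∫_0^x (1/y) ∫_0^y (1/t) ∫_0^t φ(ρ) ρ^{n−1} dρ dt dy ≤ c · sup_{x>0} x^{λ−n} ∫_0^x (1/t) ∫_0^t φ(ρ) ρ^{n−1} dρ dt. -/
open MeasureTheory ENNReal Set

noncomputable section

/-- Let `0 < λ < n`. There is `c > 0` such that for every nonnegative
nonincreasing measurable `φ` on `(0,∞)`,
`sup_{x>0} x^{λ-n} ∫_0^x (1/y) ∫_0^y (1/t) ∫_0^t φ(ρ) ρ^{n-1} dρ dt dy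
  ≤ c sup_{x>0} x^{λ-n} ∫_0^x (1/t) ∫_0^t φ(ρ) ρ^{n-1} dρ dt`. -/
theorem stmt13 (n : ℕ) (hn : 0 < n) (lam : ℝ) (hlam0 : 0 < lam) (hlamn : lam < (n : ℝ)) :
    ∃ c : ℝ, 0 < c ∧ ∀ φ : ℝ → ℝ, Measurable φ → (∀ r : ℝ, 0 < r → 0 ≤ φ r) →
      AntitoneOn φ (Set.Ioi 0) →
      radSup3 n lam φ ≤ ENNReal.ofReal c * radSup2 n lam φ := by

  refine ⟨1 / ((n : ℝ) - lam), ?_, ?_⟩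
  · have h : (0:ℝ) < (n:ℝ) - lam := by linarith
    positivity
  intro φ hφm hφ0 hφa
  set S := radSup2 n lam φ with hS
  have hnl : (0:ℝ) < (n : ℝ) - lam := by linarith
  have key : ∀ y : ℝ, 0 < y → radInt2 n φ y ≤ S * ENNReal.ofReal (y ^ ((n:ℝ) - lam)) := by
    intro y hy
    have h1 : ENNReal.ofReal (y ^ (lam - (n:ℝ))) * radInt2 n φ y ≤ S := by
      rw [hS, radSup2]
      exact le_iSup₂_of_le y hy le_rfl
    have hmul : ENNReal.ofReal (y ^ ((n:ℝ) - lam)) * ENNReal.ofReal (y ^ (lam - (n:ℝ))) = 1 := by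
      rw [← ENNReal.ofReal_mul (Real.rpow_nonneg hy.le _), ← Real.rpow_add hy]
      norm_num
    calc radInt2 n φ y
        = (ENNReal.ofReal (y ^ ((n:ℝ) - lam)) * ENNReal.ofReal (y ^ (lam - (n:ℝ))))
          * radInt2 n φ y := by rw [hmul, one_mul]
      _ = ENNReal.ofReal (y ^ ((n:ℝ) - lam)) *
          (ENNReal.ofReal (y ^ (lam - (n:ℝ))) * radInt2 n φ y) := by ring
      _ ≤ ENNReal.ofReal (y ^ ((n:ℝ) - lam)) * S := mul_le_mul_right h1 _
      _ = S * ENNReal.ofReal (y ^ ((n:ℝ) - lam)) := mul_comm _ _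
  rw [radSup3]
  refine iSup₂_le fun x hx => ?_
  -- the power integral
  have hp : (-1 : ℝ) < (n:ℝ) - lam - 1 := by linarith
  have hpow : (∫⁻ y in Set.Ioc (0:ℝ) x, ENNReal.ofReal (y ^ ((n:ℝ) - lam - 1)))
      = ENNReal.ofReal (x ^ ((n:ℝ) - lam) / ((n:ℝ) - lam)) := by
    have hint : IntegrableOn (fun y : ℝ => y ^ ((n:ℝ) - lam - 1)) (Set.Ioc (0:ℝ) x) := by
      have := (intervalIntegral.intervalIntegrable_rpow' (a := 0) (b := x) hp)
      rwa [intervalIntegrable_iff, Set.uIoc_of_le hx.le] at this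
    rw [← ofReal_integral_eq_lintegral_ofReal hint]
    · congr 1
      have : ∫ y in Set.Ioc (0:ℝ) x, y ^ ((n:ℝ) - lam - 1)
          = ∫ y in (0:ℝ)..x, y ^ ((n:ℝ) - lam - 1) := by
        rw [intervalIntegral.intervalIntegral_eq_integral_uIoc, Set.uIoc_of_le hx.le]
        simp [hx.le]
      rw [this, integral_rpow (Or.inl hp)]
      rw [Real.zero_rpow (by linarith : (n:ℝ) - lam - 1 + 1 ≠ 0)]
      ring_nf
    · filter_upwards [ae_restrict_mem measurableSet_Ioc] with y hy
      exact Real.rpow_nonneg hy.1.le _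
  have hI3 : radInt3 n φ x ≤ S * ENNReal.ofReal (x ^ ((n:ℝ) - lam) / ((n:ℝ) - lam)) := by
    rw [radInt3, ← hpow, ← lintegral_const_mul S (by fun_prop)]
    · refine setLIntegral_mono_ae (by fun_prop) ?_
      filter_upwards with y hy
      have hy0 : 0 < y := hy.1
      calc (ENNReal.ofReal y)⁻¹ * radInt2 n φ y
          ≤ (ENNReal.ofReal y)⁻¹ * (S * ENNReal.ofReal (y ^ ((n:ℝ) - lam))) :=
            mul_le_mul_right (key y hy0) _
        _ = S * ((ENNReal.ofReal y)⁻¹ * ENNReal.ofReal (y ^ ((n:ℝ) - lam))) := by ring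
        _ = S * ENNReal.ofReal (y ^ ((n:ℝ) - lam - 1)) := by
            congr 1
            rw [← ENNReal.ofReal_inv_of_pos hy0,
              ← ENNReal.ofReal_mul (by positivity)]
            congr 1
            rw [show ((n:ℝ) - lam - 1) = -1 + ((n:ℝ) - lam) by ring, Real.rpow_add hy0,
              Real.rpow_neg_one]
  calc ENNReal.ofReal (x ^ (lam - (n:ℝ))) * radInt3 n φ x
      ≤ ENNReal.ofReal (x ^ (lam - (n:ℝ))) *
        (S * ENNReal.ofReal (x ^ ((n:ℝ) - lam) / ((n:ℝ) - lam))) := mul_le_mul_right hI3 _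
    _ = S * (ENNReal.ofReal (x ^ (lam - (n:ℝ))) *
        ENNReal.ofReal (x ^ ((n:ℝ) - lam) / ((n:ℝ) - lam))) := by ring
    _ = ENNReal.ofReal (1 / ((n:ℝ) - lam)) * S := by
        rw [← ENNReal.ofReal_mul (Real.rpow_nonneg hx.le _)]
        rw [show x ^ (lam - (n:ℝ)) * (x ^ ((n:ℝ) - lam) / ((n:ℝ) - lam))
            = (x ^ (lam - (n:ℝ)) * x ^ ((n:ℝ) - lam)) / ((n:ℝ) - lam) by ring,
          ← Real.rpow_add hx]
        norm_num [mul_comm]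


end
end

section
/- The Hardy–Littlewood maximal operator is not bounded on the Zygmund–Morrey space M_{L(1+log⁺L),1/2}(ℝ): there exists a measurable function f on ℝ with ‖f‖_{M_{L(1+log⁺L),1/2}(ℝ)} < ∞ but ‖Mf‖_{M_{L(1+log⁺L),1/2}(ℝ)} = ∞. (For instance the even function equal, for x ≥ 0, to ∑_{k≥0} χ_{[k² ln²(k+e), k² ln²(k+e)+1]}(x).) -/
open MeasureTheory ENNReal Set

noncomputable section

/-!
Take for `f` the indicator of unit bumps `[x_k, x_k + 1]` at the sparse positions
`x_k = (k (1 + log k))²`. The roots `√x_k` are spaced `≥ 1 + log k` apart, so an interval of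
length `h` meets only `O(√h / log h)` bumps, and then the `L log L`-average of `f` over it is
`O(h^{-1/2})`: `f` lies in the Zygmund–Morrey space.

To the right of a bump, `M f (t) ≥ 1 / (t - x_k)`. This tail contributes only a logarithm to
`∫ M f`, but the square of a logarithm to `∫ M f · log⁺ M f`. On `[0, x_{2K}]` the `K` bumps
`K ≤ k < 2K` therefore force `∫ Φ(M f / α) > x_{2K}` unless `α ≳ log K / √x_{2K}`, so the
Zygmund–Morrey norm of `M f` is at least of order `log K` for every `K`.
-/

open Real hiding log

lemma posLog_le_self {x : ℝ} (hx : 0 ≤ x) : log⁺ x ≤ x := max_le hx (log_le_self hx)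

lemma log_natCast_mono : Monotone fun k : ℕ => Real.log k := by
  intro a b hab
  rcases a.eq_zero_or_pos with rfl | ha
  · simpa using log_natCast_nonneg b
  · exact log_le_log (by positivity) (by exact_mod_cast hab)

lemma log_natCast_succ_le (k : ℕ) : Real.log (k + 1) ≤ 1 + Real.log k := by
  rcases k.eq_zero_or_pos with rfl | hk
  · simp
  have hk' : (1 : ℝ) ≤ k := by exact_mod_cast hk
  calc Real.log (k + 1) ≤ Real.log (2 * k) := log_le_log (by positivity) (by linarith)
    _ = Real.log 2 + Real.log k := log_mul two_ne_zero (by positivity)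
    _ ≤ 1 + Real.log k := by linarith [log_two_lt_d9]

lemma lintegral_Ioc_inv_sub (a : ℝ) {b : ℝ} (hb : 1 ≤ b) :
    ∫⁻ t in Ioc (a + 1) (a + b), ENNReal.ofReal (t - a)⁻¹ = ENNReal.ofReal (Real.log b) := by
  have hcont : ContinuousOn (fun t => (t - a)⁻¹) (Icc (a + 1) (a + b)) :=
    (continuousOn_id.sub continuousOn_const).inv₀ fun t ht =>
      sub_ne_zero.2 (ne_of_gt (show a < t by linarith [ht.1]))
  rw [← ofReal_integral_eq_lintegral_ofReal
      ((hcont.integrableOn_Icc).mono_set Ioc_subset_Icc_self)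
      ((ae_restrict_iff' measurableSet_Ioc).2 (ae_of_all _ fun t ht => by
        simp only [Pi.zero_apply]; exact inv_nonneg.2 (by linarith [ht.1]))),
    ← intervalIntegral.integral_of_le (by linarith), intervalIntegral.integral_comp_sub_right
      (fun t => t⁻¹), integral_inv_of_pos (by norm_num) (by linarith)]
  congr 2; ring

lemma logPlus_eq_posLog (t : ℝ) : logPlus t = log⁺ t := max_comm _ _

lemma zygFnE_ofReal {u : ℝ} (hu : 0 ≤ u) :
    zygFnE (ENNReal.ofReal u) = ENNReal.ofReal (u * (1 + log⁺ u)) := by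
  rw [zygFnE, ENNReal.toReal_ofReal hu, logPlus_eq_posLog, ENNReal.ofReal_mul hu,
    ENNReal.ofReal_add zero_le_one posLog_nonneg, ENNReal.ofReal_one]

lemma zygFnE_zero : zygFnE 0 = 0 := zero_mul _

lemma zygFnE_top : zygFnE ⊤ = ⊤ := by
  simp [zygFnE, logPlus]

lemma zygFnE_mono : Monotone zygFnE := by
  intro a b hab
  rcases eq_or_ne b ⊤ with rfl | hb
  · rw [zygFnE_top]; exact le_top
  · refine mul_le_mul' hab (add_le_add_right (ENNReal.ofReal_le_ofReal ?_) _)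
    simp only [logPlus_eq_posLog]
    exact posLog_le_posLog ENNReal.toReal_nonneg (ENNReal.toReal_mono hb hab)

section Cubes

variable {n : ℕ} {g : Rn n → ℝ≥0∞} {c : Rn n} {h : ℝ}

lemma zygAvgE_le_ofReal {α : ℝ} (hh : 0 < h) (hα : 0 < α)
    (hint : ∫⁻ y in zCube c h, zygFnE (g y / ENNReal.ofReal α) ≤ ENNReal.ofReal (h ^ n)) :
    zygAvgE g c h ≤ ENNReal.ofReal α := by
  refine sInf_le ⟨α, hα, rfl, ?_⟩
  rw [ENNReal.inv_mul_le_iff (by simp [hh]) ENNReal.ofReal_ne_top, mul_one]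
  exact hint

lemma ofReal_le_zygAvgE {a : ℝ}
    (hint : ∀ α, 0 < α → α < a →
      ENNReal.ofReal (h ^ n) < ∫⁻ y in zCube c h, zygFnE (g y / ENNReal.ofReal α)) :
    ENNReal.ofReal a ≤ zygAvgE g c h := by
  refine le_sInf ?_
  rintro _ ⟨α, hα, rfl, hle⟩
  refine ENNReal.ofReal_le_ofReal (not_lt.1 fun hαa => ?_)
  have hlt := hint α hα hαa
  rcases eq_or_ne (ENNReal.ofReal (h ^ n)) 0 with h0 | h0
  · rw [h0] at hlt
    simp [h0, ENNReal.top_mul hlt.ne'] at hle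
  · rw [ENNReal.inv_mul_le_iff h0 ENNReal.ofReal_ne_top, mul_one] at hle
    exact hlt.not_ge hle

lemma le_zygMorreyE {lam : ℝ} (hh : 0 < h) :
    ENNReal.ofReal (h ^ lam) * zygAvgE g c h ≤ zygMorreyE lam g :=
  le_iSup₂_of_le c h (le_iSup_of_le hh le_rfl)

lemma le_maxE {x : Rn n} (hh : 0 < h) (hx : x ∈ zCube c h) :
    (ENNReal.ofReal (h ^ n))⁻¹ * ∫⁻ y in zCube c h, g y ≤ maxE g x :=
  le_iSup₂_of_le c h (le_iSup₂_of_le hh hx le_rfl)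

end Cubes

def rnOneEquiv : Rn 1 ≃ᵐ ℝ :=
  (MeasurableEquiv.toLp 2 (Fin 1 → ℝ)).symm.trans (MeasurableEquiv.funUnique (Fin 1) ℝ)

lemma rnOneEquiv_apply (x : Rn 1) : rnOneEquiv x = x 0 := rfl

lemma measurePreserving_rnOneEquiv : MeasurePreserving rnOneEquiv volume volume :=
  (EuclideanSpace.volume_preserving_symm_measurableEquiv_toLp (Fin 1)).trans
    (volume_preserving_funUnique (Fin 1) ℝ)

lemma zCube_one_eq_preimage (c : Rn 1) (h : ℝ) :
    zCube c h = rnOneEquiv ⁻¹' Icc (c 0 - h / 2) (c 0 + h / 2) := by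
  ext x
  simp only [zCube, mem_ofPred_eq, mem_preimage, mem_Icc, Fin.forall_fin_one, rnOneEquiv_apply,
    abs_sub_le_iff]
  constructor <;> rintro ⟨h₁, h₂⟩ <;> constructor <;> linarith

lemma setLIntegral_zCube_one (c : Rn 1) (h : ℝ) (G : Rn 1 → ℝ≥0∞) :
    ∫⁻ y in zCube c h, G y = ∫⁻ t in Icc (c 0 - h / 2) (c 0 + h / 2), G (rnOneEquiv.symm t) := by
  rw [zCube_one_eq_preimage, ← measurePreserving_rnOneEquiv.setLIntegral_comp_preimage_emb
    rnOneEquiv.measurableEmbedding]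
  simp only [MeasurableEquiv.symm_apply_apply]

lemma zCube_midpoint (a b : ℝ) :
    zCube (rnOneEquiv.symm ((a + b) / 2)) (b - a) = rnOneEquiv ⁻¹' Icc a b := by
  rw [zCube_one_eq_preimage, show (rnOneEquiv.symm ((a + b) / 2)) 0 = (a + b) / 2 from rfl,
    show (a + b) / 2 - (b - a) / 2 = a by ring, show (a + b) / 2 + (b - a) / 2 = b by ring]

lemma setLIntegral_zCube_midpoint (a b : ℝ) (G : Rn 1 → ℝ≥0∞) :
    ∫⁻ y in zCube (rnOneEquiv.symm ((a + b) / 2)) (b - a), G y =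
      ∫⁻ t in Icc a b, G (rnOneEquiv.symm t) := by
  rw [setLIntegral_zCube_one, show (rnOneEquiv.symm ((a + b) / 2)) 0 = (a + b) / 2 from rfl,
    show (a + b) / 2 - (b - a) / 2 = a by ring, show (a + b) / 2 + (b - a) / 2 = b by ring]

/-- The paper places its bumps at `k² ln² (k + e)`; `(k (1 + log k))²` grows alike. -/
def bumpRoot (k : ℕ) : ℝ := k * (1 + Real.log k)

def bumpStart (k : ℕ) : ℝ := bumpRoot k ^ 2

def bumps : Set ℝ := ⋃ k : ℕ, Icc (bumpStart k) (bumpStart k + 1)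

lemma natCast_le_bumpRoot (k : ℕ) : (k : ℝ) ≤ bumpRoot k :=
  le_mul_of_one_le_right k.cast_nonneg (by linarith [log_natCast_nonneg k])

lemma bumpRoot_nonneg (k : ℕ) : 0 ≤ bumpRoot k := k.cast_nonneg.trans (natCast_le_bumpRoot k)

lemma sub_mul_le_bumpRoot_sub {k₀ k₁ : ℕ} (h : k₀ ≤ k₁) :
    ((k₁ : ℝ) - k₀) * (1 + Real.log k₁) ≤ bumpRoot k₁ - bumpRoot k₀ := by
  have := log_natCast_mono h
  simp only [bumpRoot]
  nlinarith [k₀.cast_nonneg (α := ℝ)]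

lemma bumpRoot_mono : Monotone bumpRoot := fun k₀ k₁ h =>
  sub_nonneg.1 <| (mul_nonneg (sub_nonneg.2 (by exact_mod_cast h))
    (by linarith [log_natCast_nonneg k₁])).trans (sub_mul_le_bumpRoot_sub h)

lemma bumpStart_mono : Monotone bumpStart := fun _ _ h =>
  pow_le_pow_left₀ (bumpRoot_nonneg _) (bumpRoot_mono h) 2

lemma bumpStart_nonneg (k : ℕ) : 0 ≤ bumpStart k := sq_nonneg _

lemma natCast_le_bumpStart (k : ℕ) : (k : ℝ) ≤ bumpStart k := by
  have := natCast_le_bumpRoot k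
  rcases k.eq_zero_or_pos with rfl | hk
  · simpa using bumpStart_nonneg 0
  · have : (1 : ℝ) ≤ k := by exact_mod_cast hk
    simp only [bumpStart]
    nlinarith

lemma bumpStart_add_bumpRoot_le (k : ℕ) : bumpStart k + bumpRoot k ≤ bumpStart (k + 1) := by
  have h : bumpRoot k + 1 ≤ bumpRoot (k + 1) := by
    have := sub_mul_le_bumpRoot_sub (Nat.le_add_right k 1)
    have := Real.log_natCast_nonneg (k + 1)
    push_cast at *
    nlinarith
  simp only [bumpStart]
  nlinarith [bumpRoot_nonneg k]

lemma sq_bumpRoot_sub_le {k₀ k₁ : ℕ} (h : k₀ ≤ k₁) :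
    (bumpRoot k₁ - bumpRoot k₀) ^ 2 ≤ bumpStart k₁ - bumpStart k₀ := by
  simp only [bumpStart]
  nlinarith [bumpRoot_nonneg k₀, bumpRoot_mono h]

lemma log_bumpRoot_succ_le (k : ℕ) : Real.log (bumpRoot (k + 1)) ≤ 2 * (1 + Real.log k) := by
  have hlog := log_natCast_succ_le k
  have hk : (0 : ℝ) < k + 1 := by positivity
  have hL : 0 < 1 + Real.log ((k : ℝ) + 1) := by
    linarith [log_nonneg (by linarith : (1 : ℝ) ≤ k + 1)]
  rw [bumpRoot, Nat.cast_succ, log_mul hk.ne' hL.ne']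
  linarith [log_le_sub_one_of_pos hL]

def bumpsMeeting (A B : ℝ) : Finset ℕ :=
  (Finset.range (⌊B⌋₊ + 1)).filter fun k => bumpStart k ≤ B ∧ A ≤ bumpStart k + 1

lemma mem_bumpsMeeting {A B : ℝ} {k : ℕ} :
    k ∈ bumpsMeeting A B ↔ bumpStart k ≤ B ∧ A ≤ bumpStart k + 1 := by
  simp only [bumpsMeeting, Finset.mem_filter, Finset.mem_range, and_iff_right_iff_imp]
  exact fun h => Nat.lt_succ_of_le (Nat.le_floor ((natCast_le_bumpStart k).trans h.1))

lemma volume_bumps_inter_Icc_le (A B : ℝ) :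
    volume (bumps ∩ Icc A B) ≤ (bumpsMeeting A B).card := by
  have hsub :
      bumps ∩ Icc A B ⊆ ⋃ k ∈ bumpsMeeting A B, Icc (bumpStart k) (bumpStart k + 1) := by
    rintro x ⟨hx, hA, hB⟩
    obtain ⟨k, hk⟩ := mem_iUnion.1 hx
    exact mem_biUnion (mem_bumpsMeeting.2 ⟨hk.1.trans hB, hA.trans hk.2⟩) hk
  calc volume (bumps ∩ Icc A B)
      ≤ ∑ k ∈ bumpsMeeting A B, volume (Icc (bumpStart k) (bumpStart k + 1)) :=
        (measure_mono hsub).trans (measure_biUnion_finset_le _ _)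
    _ = (bumpsMeeting A B).card := by simp [Real.volume_Icc]

/-- With `s = √(B - A)` and `k₁` the last bump met: the roots of the bumps met lie in a window of
length `≤ 2 s` and are spaced `≥ 1 + log k₁` apart, while
`log s ≤ log (bumpRoot (k₁ + 1)) + s / bumpRoot (k₁ + 1)` and `bumpRoot (k₁ + 1) ≥ k₁ + 1`. -/
lemma card_bumpsMeeting_mul_le {A B : ℝ} (hAB : 1 ≤ B - A) :
    ((bumpsMeeting A B).card : ℝ) * (1 + log⁺ √(B - A)) ≤ 13 * √(B - A) := by
  set T := bumpsMeeting A B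
  set s := √(B - A)
  have hs : 1 ≤ s := one_le_sqrt.2 hAB
  have hss : s ^ 2 = B - A := sq_sqrt (by linarith)
  rcases le_or_gt T.card 1 with hT | hT
  · have : (T.card : ℝ) ≤ 1 := by exact_mod_cast hT
    nlinarith [posLog_le_self (by linarith : 0 ≤ s), posLog_nonneg (x := s)]
  have hne : T.Nonempty := Finset.card_pos.1 (by omega)
  set k₀ := T.min' hne
  set k₁ := T.max' hne
  have hk : k₀ < k₁ := T.min'_lt_max'_of_card hT
  obtain ⟨-, hA₀⟩ := mem_bumpsMeeting.1 (T.min'_mem hne)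
  obtain ⟨h₁B, -⟩ := mem_bumpsMeeting.1 (T.max'_mem hne)
  have hcard : T.card ≤ k₁ + 1 - k₀ :=
    (Finset.card_le_card fun k hk => Finset.mem_Icc.2 ⟨T.min'_le k hk, T.le_max' k hk⟩).trans
      (Nat.card_Icc k₀ k₁).le
  have hN₁ : (T.card : ℝ) ≤ 2 * ((k₁ : ℝ) - k₀) := by
    rw [← Nat.cast_sub hk.le]; exact_mod_cast (by omega : T.card ≤ 2 * (k₁ - k₀))
  have hN₂ : (T.card : ℝ) ≤ bumpRoot (k₁ + 1) :=
    le_trans (by exact_mod_cast (by omega : T.card ≤ k₁ + 1)) (natCast_le_bumpRoot _)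
  have hwindow : bumpRoot k₁ - bumpRoot k₀ ≤ 2 * s := by
    nlinarith [sq_bumpRoot_sub_le hk.le, bumpRoot_mono hk.le]
  have hL : 1 ≤ 1 + Real.log k₁ := by linarith [log_natCast_nonneg k₁]
  have hNL : (T.card : ℝ) * (1 + Real.log k₁) ≤ 4 * s := by
    nlinarith [sub_mul_le_bumpRoot_sub hk.le]
  have hR : 1 ≤ bumpRoot (k₁ + 1) := le_trans (by simp) (natCast_le_bumpRoot (k₁ + 1))
  have hlog : log⁺ s ≤ 2 * (1 + Real.log k₁) + s / bumpRoot (k₁ + 1) := by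
    calc log⁺ s = log⁺ (bumpRoot (k₁ + 1) * (s / bumpRoot (k₁ + 1))) := by field_simp
      _ ≤ log⁺ (bumpRoot (k₁ + 1)) + log⁺ (s / bumpRoot (k₁ + 1)) := posLog_mul
      _ ≤ 2 * (1 + Real.log k₁) + s / bumpRoot (k₁ + 1) := by
        rw [posLog_eq_log (by rwa [abs_of_nonneg (by linarith)])]
        exact add_le_add (log_bumpRoot_succ_le k₁) (posLog_le_self (by positivity))
  have hNs : (T.card : ℝ) * (s / bumpRoot (k₁ + 1)) ≤ s := by
    rw [mul_div_assoc']; exact div_le_of_le_mul₀ (by positivity) (by positivity)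
      (by nlinarith)
  nlinarith

lemma volume_bumps_inter_Icc_mul_le {A B : ℝ} (hAB : A ≤ B) :
    (volume (bumps ∩ Icc A B)).toReal * (1 + log⁺ √(B - A)) ≤ 13 * √(B - A) := by
  rcases le_total (B - A) 1 with hle | hle
  · have hν : (volume (bumps ∩ Icc A B)).toReal ≤ B - A := by
      refine ENNReal.toReal_le_of_le_ofReal (by linarith) ?_
      exact (measure_mono inter_subset_right).trans (Real.volume_Icc).le
    have hs : √(B - A) ≤ 1 := sqrt_le_one.2 hle
    rw [(posLog_eq_zero_iff _).2 (by rwa [abs_of_nonneg (sqrt_nonneg _)])]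
    nlinarith [sq_sqrt (by linarith : 0 ≤ B - A), sqrt_nonneg (B - A)]
  · have hν : (volume (bumps ∩ Icc A B)).toReal ≤ (bumpsMeeting A B).card := by
      simpa using ENNReal.toReal_mono (by simp) (volume_bumps_inter_Icc_le A B)
    exact (mul_le_mul_of_nonneg_right hν (by linarith [posLog_nonneg (x := √(B - A))])).trans
      (card_bumpsMeeting_mul_le hle)

def bumpFn (x : Rn 1) : ℝ := bumps.indicator 1 (x 0)

lemma bumpFn_symm_apply (t : ℝ) : bumpFn (rnOneEquiv.symm t) = bumps.indicator 1 t := rfl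

lemma measurableSet_bumps : MeasurableSet bumps := MeasurableSet.iUnion fun _ => measurableSet_Icc

lemma measurable_bumpFn : Measurable bumpFn :=
  (measurable_const.indicator measurableSet_bumps).comp rnOneEquiv.measurable

lemma zygAvg_bumpFn_le (c : Rn 1) {h : ℝ} (hh : 0 < h) :
    zygAvg bumpFn c h ≤ ENNReal.ofReal (13 / √h) := by
  have hs : 0 < √h := sqrt_pos.2 hh
  refine zygAvgE_le_ofReal hh (by positivity) ?_
  set A := c 0 - h / 2
  set B := c 0 + h / 2
  have hBA : B - A = h := by ring
  set Φ := ENNReal.ofReal (√h / 13 * (1 + log⁺ (√h / 13)))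
  have hpt : ∀ t,
      zygFnE (ENNReal.ofReal |bumpFn (rnOneEquiv.symm t)| / ENNReal.ofReal (13 / √h)) =
        bumps.indicator (fun _ => Φ) t := by
    intro t
    rw [bumpFn_symm_apply]
    by_cases ht : t ∈ bumps
    · rw [indicator_of_mem ht, indicator_of_mem ht, Pi.one_apply, abs_one,
        ← ENNReal.ofReal_div_of_pos (by positivity), one_div_div, zygFnE_ofReal (by positivity)]
    · rw [indicator_of_notMem ht, indicator_of_notMem ht, abs_zero, ENNReal.ofReal_zero,
        ENNReal.zero_div, zygFnE_zero]
  rw [setLIntegral_zCube_one, funext hpt, lintegral_indicator measurableSet_bumps,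
    setLIntegral_const, Measure.restrict_apply measurableSet_bumps, pow_one,
    ← ENNReal.ofReal_toReal (measure_ne_top_of_subset inter_subset_right
      (by simp [Real.volume_Icc])), ← ENNReal.ofReal_mul
      (mul_nonneg (by positivity) (add_nonneg zero_le_one posLog_nonneg))]
  refine ENNReal.ofReal_le_ofReal ?_
  have hν := volume_bumps_inter_Icc_mul_le (A := A) (B := B) (by linarith)
  rw [hBA] at hν
  have hlog : log⁺ (√h / 13) ≤ log⁺ √h := posLog_le_posLog (by positivity) (by linarith)
  calc √h / 13 * (1 + log⁺ (√h / 13)) * (volume (bumps ∩ Icc A B)).toReal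
      ≤ √h / 13 * ((volume (bumps ∩ Icc A B)).toReal * (1 + log⁺ √h)) := by
        rw [mul_assoc, mul_comm (1 + _)]; gcongr
    _ ≤ √h / 13 * (13 * √h) := by gcongr
    _ = h := by field_simp; exact sq_sqrt hh.le

lemma zygMorrey_bumpFn_le : zygMorrey (1 / 2 : ℝ) bumpFn ≤ 13 := by
  refine iSup₂_le fun c h => iSup_le fun hh => ?_
  have hs : 0 < √h := sqrt_pos.2 hh
  calc ENNReal.ofReal (h ^ (1 / 2 : ℝ)) * zygAvg bumpFn c h
      ≤ ENNReal.ofReal √h * ENNReal.ofReal (13 / √h) := by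
        rw [← sqrt_eq_rpow]; gcongr; exact zygAvg_bumpFn_le c hh
    _ = 13 := by
        rw [← ENNReal.ofReal_mul hs.le, mul_div_cancel₀ _ hs.ne', ENNReal.ofReal_ofNat]

/-- Witnessed by the interval `[bumpStart k, t]`, which contains a whole bump. -/
lemma inv_sub_le_HLM_bumpFn (k : ℕ) {t : ℝ} (ht : bumpStart k + 1 ≤ t) :
    ENNReal.ofReal (t - bumpStart k)⁻¹ ≤ HLM bumpFn (rnOneEquiv.symm t) := by
  set a := bumpStart k
  have hpos : 0 < t - a := by linarith
  have hmem : rnOneEquiv.symm t ∈ zCube (rnOneEquiv.symm ((a + t) / 2)) (t - a) := by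
    rw [zCube_midpoint, mem_preimage, MeasurableEquiv.apply_symm_apply]
    exact ⟨by linarith, le_rfl⟩
  have hbump : Icc a (a + 1) ⊆ bumps := subset_iUnion_of_subset k le_rfl
  have hone :
      1 ≤ ∫⁻ y in zCube (rnOneEquiv.symm ((a + t) / 2)) (t - a), ENNReal.ofReal |bumpFn y| := by
    rw [setLIntegral_zCube_midpoint]
    calc (1 : ℝ≥0∞) = ∫⁻ _ in Icc a (a + 1), 1 := by simp [Real.volume_Icc]
      _ ≤ ∫⁻ s in Icc a (a + 1), ENNReal.ofReal |bumpFn (rnOneEquiv.symm s)| :=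
        setLIntegral_mono' measurableSet_Icc fun s hs => by
          simp [bumpFn_symm_apply, indicator_of_mem (hbump hs)]
      _ ≤ _ := lintegral_mono_set (Icc_subset_Icc le_rfl ht)
  calc ENNReal.ofReal (t - a)⁻¹ = (ENNReal.ofReal ((t - a) ^ 1))⁻¹ * 1 := by
        rw [pow_one, mul_one, ENNReal.ofReal_inv_of_pos hpos]
    _ ≤ (ENNReal.ofReal ((t - a) ^ 1))⁻¹ *
          ∫⁻ y in zCube (rnOneEquiv.symm ((a + t) / 2)) (t - a), ENNReal.ofReal |bumpFn y| := by
        gcongr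
    _ ≤ HLM bumpFn (rnOneEquiv.symm t) := le_maxE hpos hmem

/-- On this stretch `M f / α ≥ √K`, so
`Φ(M f / α) ≥ (log K / 2) · M f / α ≥ log K / (2 α (t - a))`. -/
lemma log_sq_div_le_lintegral_past_bump {K : ℕ} (hK : 1 ≤ K) {α : ℝ} (hα : 0 < α)
    (hαK : α * K ≤ 1) (k : ℕ) :
    ENNReal.ofReal (Real.log K ^ 2 / (4 * α)) ≤
      ∫⁻ t in Ioc (bumpStart k + 1) (bumpStart k + √K),
        zygFnE (HLM bumpFn (rnOneEquiv.symm t) / ENNReal.ofReal α) := by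
  set a := bumpStart k
  have hK' : (1 : ℝ) ≤ K := by exact_mod_cast hK
  have hsK : 1 ≤ √(K : ℝ) := one_le_sqrt.2 hK'
  have hpt : ∀ t ∈ Ioc (a + 1) (a + √K),
      ENNReal.ofReal (Real.log K / (2 * α)) * ENNReal.ofReal (t - a)⁻¹ ≤
        zygFnE (HLM bumpFn (rnOneEquiv.symm t) / ENNReal.ofReal α) := by
    rintro t ⟨ht₁, ht₂⟩
    have hd : 0 < t - a := by linarith
    set u := (t - a)⁻¹ / α
    have hu : √K ≤ u := by
      rw [le_div_iff₀ hα, le_inv_comm₀ (by positivity) hd]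
      calc t - a ≤ √K := by linarith
        _ = (√K * α)⁻¹ * (α * K) := by
          field_simp; rw [sq_sqrt (by positivity)]
        _ ≤ (√K * α)⁻¹ := mul_le_of_le_one_right (by positivity) hαK
    have hlog : Real.log K / 2 ≤ log⁺ u := by
      rw [← Real.log_sqrt (by positivity)]
      exact (Real.log_le_log (by positivity) hu).trans (le_max_right _ _)
    calc ENNReal.ofReal (Real.log K / (2 * α)) * ENNReal.ofReal (t - a)⁻¹
        = ENNReal.ofReal (u * (Real.log K / 2)) := by
          rw [← ENNReal.ofReal_mul (by positivity)]; congr 1; simp only [u]; field_simp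
      _ ≤ ENNReal.ofReal (u * (1 + log⁺ u)) := by
          gcongr; linarith
      _ = zygFnE (ENNReal.ofReal u) := (zygFnE_ofReal (by positivity)).symm
      _ ≤ zygFnE (HLM bumpFn (rnOneEquiv.symm t) / ENNReal.ofReal α) := by
          refine zygFnE_mono ?_
          rw [ENNReal.ofReal_div_of_pos hα]
          exact ENNReal.div_le_div_right (inv_sub_le_HLM_bumpFn k (by linarith)) _
  calc ENNReal.ofReal (Real.log K ^ 2 / (4 * α))
      = ENNReal.ofReal (Real.log K / (2 * α)) * ENNReal.ofReal (Real.log √K) := by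
        rw [← ENNReal.ofReal_mul (by positivity), Real.log_sqrt (by positivity)]
        congr 1; ring
    _ = ∫⁻ t in Ioc (a + 1) (a + √K),
          ENNReal.ofReal (Real.log K / (2 * α)) * ENNReal.ofReal (t - a)⁻¹ := by
        rw [lintegral_const_mul' _ _ ENNReal.ofReal_ne_top, lintegral_Ioc_inv_sub a hsK]
    _ ≤ _ := setLIntegral_mono' measurableSet_Ioc hpt

/-- The stretches lie in the disjoint gaps `(bumpStart k, bumpStart (k + 1)]`. -/
lemma sum_lintegral_past_bumps_le {K : ℕ} (hK : 1 ≤ K) (F : ℝ → ℝ≥0∞) :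
    ∑ k ∈ Finset.Ico K (2 * K), ∫⁻ t in Ioc (bumpStart k + 1) (bumpStart k + √K), F t ≤
      ∫⁻ t in Icc 0 (bumpStart (2 * K)), F t := by
  have hK' : (1 : ℝ) ≤ K := by exact_mod_cast hK
  have hsK : √(K : ℝ) ≤ K := by
    rw [sqrt_le_left (by positivity)]; nlinarith
  calc ∑ k ∈ Finset.Ico K (2 * K), ∫⁻ t in Ioc (bumpStart k + 1) (bumpStart k + √K), F t
      ≤ ∑ k ∈ Finset.Ico K (2 * K), ∫⁻ t in Ioc (bumpStart k) (bumpStart (k + 1)), F t := by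
        refine Finset.sum_le_sum fun k hk =>
          lintegral_mono_set (Ioc_subset_Ioc (by linarith) ?_)
        have hKk : (K : ℝ) ≤ k := by exact_mod_cast (Finset.mem_Ico.1 hk).1
        linarith [bumpStart_add_bumpRoot_le k, natCast_le_bumpRoot k]
    _ = ∫⁻ t in ⋃ k ∈ Finset.Ico K (2 * K), Ioc (bumpStart k) (bumpStart (k + 1)), F t :=
        (lintegral_biUnion_finset (bumpStart_mono.pairwise_disjoint_on_Ioc_succ.set_pairwise _)
          (fun _ _ => measurableSet_Ioc) _).symm
    _ ≤ ∫⁻ t in Icc 0 (bumpStart (2 * K)), F t := by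
        refine lintegral_mono_set (iUnion₂_subset fun k hk => ?_)
        refine Ioc_subset_Icc_self.trans (Icc_subset_Icc (bumpStart_nonneg k) (bumpStart_mono ?_))
        exact (Finset.mem_Ico.1 hk).2

lemma one_le_of_two_le_log {K : ℕ} (hK : 2 ≤ Real.log K) : 1 ≤ K :=
  Nat.one_le_iff_ne_zero.2 fun h => by norm_num [h] at hK

lemma bumpRoot_two_mul_le {K : ℕ} (hK : 2 ≤ Real.log K) :
    bumpRoot (2 * K) ≤ 4 * K * Real.log K := by
  have hK1 : (1 : ℝ) ≤ K := by exact_mod_cast one_le_of_two_le_log hK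
  rw [bumpRoot, Nat.cast_mul, Nat.cast_ofNat, Real.log_mul two_ne_zero (by positivity)]
  nlinarith [log_two_lt_d9]

lemma two_mul_log_le_bumpRoot_two_mul (K : ℕ) : 2 * K * Real.log K ≤ bumpRoot (2 * K) := by
  have hlog := log_natCast_mono (Nat.le_mul_of_pos_left K two_pos)
  simp only [Nat.cast_mul, Nat.cast_ofNat] at hlog
  rw [bumpRoot, Nat.cast_mul, Nat.cast_ofNat]
  nlinarith

/-- Each of the `K` bumps `K ≤ k < 2K` contributes `≥ log² K / (4 α)` to `∫ Φ(M f / α)`. -/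
lemma ofReal_le_zygAvgE_HLM_bumpFn {K : ℕ} (hK : 2 ≤ Real.log K) :
    ENNReal.ofReal (Real.log K / (16 * bumpRoot (2 * K))) ≤
      zygAvgE (HLM bumpFn) (rnOneEquiv.symm (bumpStart (2 * K) / 2)) (bumpStart (2 * K)) := by
  have hK1 := one_le_of_two_le_log hK
  have hK1' : (1 : ℝ) ≤ K := by exact_mod_cast hK1
  have hr := two_mul_log_le_bumpRoot_two_mul K
  have hr' := bumpRoot_two_mul_le hK
  set r := bumpRoot (2 * K)
  set L := Real.log K
  have hrpos : 0 < r := by nlinarith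
  refine ofReal_le_zygAvgE fun α hα hαr => ?_
  have hαr' : α * (16 * r) < L := (lt_div_iff₀ (by positivity)).1 hαr
  have hαK : α * K ≤ 1 := by nlinarith
  have hreal : r ^ 2 < K * (L ^ 2 / (4 * α)) := by
    rw [mul_div_assoc', lt_div_iff₀ (by positivity)]
    nlinarith
  have hcube := setLIntegral_zCube_midpoint 0 (bumpStart (2 * K))
    (fun y => zygFnE (HLM bumpFn y / ENNReal.ofReal α))
  rw [zero_add, sub_zero] at hcube
  calc ENNReal.ofReal (bumpStart (2 * K) ^ 1)
      < K * ENNReal.ofReal (L ^ 2 / (4 * α)) := by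
        rw [pow_one, ← ENNReal.ofReal_natCast, ← ENNReal.ofReal_mul K.cast_nonneg]
        exact (ENNReal.ofReal_lt_ofReal_iff (by positivity)).2 hreal
    _ = ∑ k ∈ Finset.Ico K (2 * K), ENNReal.ofReal (L ^ 2 / (4 * α)) := by
        rw [Finset.sum_const, Nat.card_Ico, nsmul_eq_mul, two_mul, Nat.add_sub_cancel]
    _ ≤ ∑ k ∈ Finset.Ico K (2 * K), ∫⁻ t in Ioc (bumpStart k + 1) (bumpStart k + √K),
          zygFnE (HLM bumpFn (rnOneEquiv.symm t) / ENNReal.ofReal α) :=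
        Finset.sum_le_sum fun k _ => log_sq_div_le_lintegral_past_bump hK1 hα hαK k
    _ ≤ _ := (sum_lintegral_past_bumps_le hK1 _).trans_eq hcube.symm

lemma ofReal_log_div_le_zygMorreyE_HLM_bumpFn {K : ℕ} (hK : 2 ≤ Real.log K) :
    ENNReal.ofReal (Real.log K / 16) ≤ zygMorreyE (1 / 2 : ℝ) (HLM bumpFn) := by
  have hK1 : (1 : ℝ) ≤ K := by exact_mod_cast one_le_of_two_le_log hK
  have hr : 0 < bumpRoot (2 * K) := by nlinarith [two_mul_log_le_bumpRoot_two_mul K]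
  have hroot : bumpStart (2 * K) ^ (1 / 2 : ℝ) = bumpRoot (2 * K) := by
    rw [← sqrt_eq_rpow, bumpStart, sqrt_sq hr.le]
  calc ENNReal.ofReal (Real.log K / 16)
      = ENNReal.ofReal (bumpRoot (2 * K)) *
          ENNReal.ofReal (Real.log K / (16 * bumpRoot (2 * K))) := by
        rw [← ENNReal.ofReal_mul hr.le]; congr 1; field_simp
    _ ≤ ENNReal.ofReal (bumpStart (2 * K) ^ (1 / 2 : ℝ)) *
          zygAvgE (HLM bumpFn) (rnOneEquiv.symm (bumpStart (2 * K) / 2))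
            (bumpStart (2 * K)) := by
        rw [hroot]; gcongr; exact ofReal_le_zygAvgE_HLM_bumpFn hK
    _ ≤ _ := le_zygMorreyE (pow_pos hr 2)

lemma zygMorreyE_HLM_bumpFn_eq_top : zygMorreyE (1 / 2 : ℝ) (HLM bumpFn) = ⊤ := by
  refine ENNReal.eq_top_of_forall_nnreal_le fun R => ?_
  set K := ⌈exp (16 * R + 2)⌉₊
  have hK : 16 * R + 2 ≤ Real.log K := by
    rw [Real.le_log_iff_exp_le (by positivity)]
    exact Nat.le_ceil _
  calc (R : ℝ≥0∞) = ENNReal.ofReal R := (ENNReal.ofReal_coe_nnreal).symm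
    _ ≤ ENNReal.ofReal (Real.log K / 16) := ENNReal.ofReal_le_ofReal (by linarith)
    _ ≤ _ := ofReal_log_div_le_zygMorreyE_HLM_bumpFn (by linarith [R.coe_nonneg])

/-- The Hardy–Littlewood maximal operator is not bounded on the
Zygmund–Morrey space `M_{L(1+log⁺L),1/2}(ℝ)`: there is a measurable `f` with
`‖f‖_{M_{L(1+log⁺L),1/2}} < ∞` but `‖Mf‖_{M_{L(1+log⁺L),1/2}} = ∞`. -/
theorem stmt15 :
    ∃ f : Rn 1 → ℝ, Measurable f ∧
      zygMorrey (1 / 2 : ℝ) f ≠ ⊤ ∧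
      zygMorreyE (1 / 2 : ℝ) (HLM f) = ⊤ :=
  ⟨bumpFn, measurable_bumpFn, ne_top_of_le_ne_top ENNReal.ofNat_ne_top zygMorrey_bumpFn_le,
    zygMorreyE_HLM_bumpFn_eq_top⟩
end
end
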